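/- If either |B| ≥ |B|_c, or 0 < |B| < |B|_c and |ξ| ≤ |ξ|_{vc}^B, then α(s) ≥ 0 for every s > 0. -/

import Mathlib

/-!
Since `E₁ ≥ 0`, it suffices that `ξ²E₀(ψ) ≥ 0`, i.e. that the gravity term `g[ρ]ψ(0)²` minus
the tension term `B²∫ψ'²`, times `ξ²`, is at most `B²∫ψ''²`. If `|B| ≥ |B|_c`, gravity is at most
tension because the Rayleigh quotient of `ψ` (made Lipschitz on `ℝ` by clamping to `[-1, 1]`) is
at most `|B|_c²`. Otherwise either gravity is at most tension, or `ψ` itself is a competitor for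
`(|ξ|_{vc}^B)² ≥ ξ²`.
-/

open MeasureTheory Set Filter Topology

noncomputable section

/-- The set of Rayleigh quotients defining the critical magnetic number `|B|_c`. -/
def BcSet (g ρp ρm : ℝ) : Set ℝ :=
  {r | ∃ φ : ℝ → ℝ, (∃ K, LipschitzWith K φ) ∧ φ (-1) = 0 ∧ φ 1 = 0 ∧
    ¬ (∀ᵐ y ∂(volume.restrict (Icc (-1:ℝ) 1)), φ y = 0) ∧
    r = g * (ρp - ρm) * (φ 0) ^ 2 / ∫ y in (-1:ℝ)..1, (deriv φ y) ^ 2}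

/-- The set of quotients defining the vertical critical frequency `|ξ|_{vc}^B`. -/
def XivcSet (g ρp ρm B : ℝ) : Set ℝ :=
  {r | ∃ φ : ℝ → ℝ, ContDiff ℝ 2 φ ∧ φ (-1) = 0 ∧ φ 1 = 0 ∧
    deriv φ (-1) = 0 ∧ deriv φ 1 = 0 ∧
    0 < g * (ρp - ρm) * (φ 0) ^ 2 - B ^ 2 * ∫ y in (-1:ℝ)..1, (deriv φ y) ^ 2 ∧
    r = (B ^ 2 * ∫ y in (-1:ℝ)..1, (deriv (deriv φ) y) ^ 2) /
        (g * (ρp - ρm) * (φ 0) ^ 2 - B ^ 2 * ∫ y in (-1:ℝ)..1, (deriv φ y) ^ 2)}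

/-- The set of quotients defining the horizontal critical frequency `|ξ|_{hc}^B`. -/
def XihcSet (g ρp ρm B : ℝ) : Set ℝ :=
  {r | ∃ φ : ℝ → ℝ, (∃ K, LipschitzWith K φ) ∧ φ (-1) = 0 ∧ φ 1 = 0 ∧
    ¬ (∀ᵐ y ∂(volume.restrict (Icc (-1:ℝ) 1)), φ y = 0) ∧
    r = (g * (ρp - ρm) * (φ 0) ^ 2 - B ^ 2 * ∫ y in (-1:ℝ)..1, (deriv φ y) ^ 2) /
        (B ^ 2 * ∫ y in (-1:ℝ)..1, (φ y) ^ 2)}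

/-- The magnetic part `E₀` of the energy of the vertical problem. -/
def E0 (g ρp ρm B ξ : ℝ) (ψ : ℝ → ℝ) : ℝ :=
  (1/2) * (∫ y in (-1:ℝ)..1, B ^ 2 * ((deriv ψ y) ^ 2 + (deriv (deriv ψ) y) ^ 2 / ξ ^ 2)) -
    (1/2) * (g * (ρp - ρm)) * (ψ 0) ^ 2

/-- The viscous part `E₁` of the energy, with piecewise viscosity `μ₊` above, `μ₋` below. -/
def E1 (μp μm ξ : ℝ) (ψ : ℝ → ℝ) : ℝ :=
  (1/2) * ∫ y in (-1:ℝ)..1,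
    (if 0 < y then μp else μm) *
      (4 * ξ ^ 2 * (deriv ψ y) ^ 2 + (ξ ^ 2 * ψ y + deriv (deriv ψ) y) ^ 2)

/-- The normalization functional `J`, with piecewise density `ρ₊` above, `ρ₋` below. -/
def Jfun (ρp ρm ξ : ℝ) (ψ : ℝ → ℝ) : ℝ :=
  (1/2) * ∫ y in (-1:ℝ)..1,
    (if 0 < y then ρp else ρm) * (ξ ^ 2 * (ψ y) ^ 2 + (deriv ψ y) ^ 2)

/-- `ψ` is an admissible test function: `C²` with vanishing boundary values of `ψ` and `ψ'`. -/
def Adm (ψ : ℝ → ℝ) : Prop :=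
  ContDiff ℝ 2 ψ ∧ ψ (-1) = 0 ∧ ψ 1 = 0 ∧ deriv ψ (-1) = 0 ∧ deriv ψ 1 = 0

/-- `α(s)`: the infimum of the modified energy `E(ψ;s) = ξ²E₀(ψ) + sE₁(ψ)` over admissible
`ψ` normalized by `J(ψ) = 1`. -/
def alpha (ρp ρm μp μm g B ξ s : ℝ) : ℝ :=
  sInf {r : ℝ | ∃ ψ : ℝ → ℝ, Adm ψ ∧ Jfun ρp ρm ξ ψ = 1 ∧
    r = ξ ^ 2 * E0 g ρp ρm B ξ ψ + s * E1 μp μm ξ ψ}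

lemma integral_sq_nonneg_of_le {f : ℝ → ℝ} {a b : ℝ} (hab : a ≤ b) :
    0 ≤ ∫ y in a..b, f y ^ 2 :=
  intervalIntegral.integral_nonneg hab fun _ _ => sq_nonneg _

lemma eq_of_integral_deriv_sq_eq_zero {f : ℝ → ℝ} {a b x : ℝ} (hf : ContDiff ℝ 1 f)
    (hab : a ≤ b) (h : ∫ y in a..b, deriv f y ^ 2 = 0) (hx : x ∈ Icc a b) : f x = f a := by
  have hf' : Continuous (deriv f) := hf.continuous_deriv_one
  have hsq : EqOn (fun y => deriv f y ^ 2) 0 (Ioc a b) :=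
    Measure.eqOn_Ioc_of_ae_eq (μ := volume)
      ((intervalIntegral.integral_eq_zero_iff_of_le_of_nonneg_ae hab
        (ae_of_all _ fun _ => sq_nonneg _) ((hf'.pow 2).intervalIntegrable _ _)).1 h)
      (by fun_prop) continuousOn_const
  have hzero : ∫ y in a..x, deriv f y = 0 := by
    rw [intervalIntegral.integral_congr_Ioo_of_le hx.1 (g := 0) fun y hy =>
      pow_eq_zero_iff two_ne_zero |>.1 (hsq ⟨hy.1, hy.2.le.trans hx.2⟩)]
    simp
  rw [intervalIntegral.integral_deriv_eq_sub (fun y _ => hf.differentiable one_ne_zero y)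
    (hf'.intervalIntegrable _ _)] at hzero
  linarith

lemma ContDiff.exists_lipschitzWith_eqOn_Icc {f : ℝ → ℝ} (hf : ContDiff ℝ 1 f) {a b : ℝ}
    (hab : a ≤ b) :
    ∃ φ : ℝ → ℝ, (∃ K, LipschitzWith K φ) ∧ EqOn φ f (Icc a b) ∧
      EqOn (deriv φ) (deriv f) (Ioo a b) := by
  obtain ⟨K, hK⟩ := hf.locallyLipschitz.locallyLipschitzOn.exists_lipschitzOnWith_of_compact
    (isCompact_Icc (a := a) (b := b))
  refine ⟨fun y => f (projIcc a b hab y), ⟨K * 1, ?_⟩, fun y hy => by simp [projIcc_of_mem hab hy],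
    fun y hy => ?_⟩
  · exact lipschitzOnWith_univ.1 <| hK.comp (LipschitzWith.projIcc hab).lipschitzOnWith
      fun y _ => Subtype.mem _
  · refine Filter.EventuallyEq.deriv_eq ?_
    filter_upwards [Ioo_mem_nhds hy.1 hy.2] with z hz
    simp [projIcc_of_mem hab (Ioo_subset_Icc_self hz)]

lemma div_mem_BcSet {g ρp ρm : ℝ} {ψ : ℝ → ℝ} (hψ : ContDiff ℝ 1 ψ) (hm : ψ (-1) = 0)
    (hp : ψ 1 = 0) (h0 : ψ 0 ≠ 0) :
    g * (ρp - ρm) * ψ 0 ^ 2 / ∫ y in (-1:ℝ)..1, deriv ψ y ^ 2 ∈ BcSet g ρp ρm := by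
  have hI : (-1:ℝ) ≤ 1 := by norm_num
  obtain ⟨φ, ⟨K, hK⟩, hφψ, hderiv⟩ := hψ.exists_lipschitzWith_eqOn_Icc hI
  have hφ0 : φ 0 = ψ 0 := hφψ ⟨by norm_num, by norm_num⟩
  refine ⟨φ, ⟨K, hK⟩, (hφψ (left_mem_Icc.2 hI)).trans hm, (hφψ (right_mem_Icc.2 hI)).trans hp,
    fun hae => h0 ?_, ?_⟩
  · rw [← hφ0]
    exact Measure.eqOn_Icc_of_ae_eq (μ := volume) (by norm_num) hae hK.continuous.continuousOn
      continuousOn_const ⟨by norm_num, by norm_num⟩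
  · rw [hφ0, intervalIntegral.integral_congr_Ioo_of_le hI (f := fun y => deriv φ y ^ 2)
      (g := fun y => deriv ψ y ^ 2) fun y hy => by simp only [hderiv hy]]

lemma gravity_le_tension_of_le_abs {g ρp ρm B Bc : ℝ} (hBc : 0 < Bc)
    (hBcsq : Bc ^ 2 = sSup (BcSet g ρp ρm)) (hBBc : Bc ≤ |B|) {ψ : ℝ → ℝ}
    (hψ : ContDiff ℝ 1 ψ) (hm : ψ (-1) = 0) (hp : ψ 1 = 0) :
    g * (ρp - ρm) * ψ 0 ^ 2 ≤ B ^ 2 * ∫ y in (-1:ℝ)..1, deriv ψ y ^ 2 := by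
  set I := ∫ y in (-1:ℝ)..1, deriv ψ y ^ 2
  have hI : 0 ≤ I := integral_sq_nonneg_of_le (by norm_num)
  rcases eq_or_ne (ψ 0) 0 with h0 | h0
  · rw [h0]
    simpa using mul_nonneg (sq_nonneg B) hI
  have hIpos : 0 < I := hI.lt_of_ne fun hI0 => h0 <| by
    simpa [hm] using eq_of_integral_deriv_sq_eq_zero hψ (by norm_num) hI0.symm
      (x := 0) ⟨by norm_num, by norm_num⟩
  have hbdd : BddAbove (BcSet g ρp ρm) := by
    by_contra h
    rw [Real.sSup_of_not_bddAbove h] at hBcsq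
    exact (pow_pos hBc 2).ne' hBcsq
  have hquot : g * (ρp - ρm) * ψ 0 ^ 2 / I ≤ B ^ 2 := calc
    _ ≤ sSup (BcSet g ρp ρm) := le_csSup hbdd (div_mem_BcSet hψ hm hp h0)
    _ = Bc ^ 2 := hBcsq.symm
    _ ≤ B ^ 2 := sq_le_sq.2 (by rwa [abs_of_pos hBc])
  exact (div_le_iff₀ hIpos).1 hquot

lemma sq_mul_gravity_sub_tension_le_of_abs_le {g ρp ρm B xivc ξ : ℝ}
    (hxivcsq : xivc ^ 2 = sInf (XivcSet g ρp ρm B)) (hξ : |ξ| ≤ xivc) {ψ : ℝ → ℝ}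
    (hψ : Adm ψ) :
    ξ ^ 2 * (g * (ρp - ρm) * ψ 0 ^ 2 - B ^ 2 * ∫ y in (-1:ℝ)..1, deriv ψ y ^ 2) ≤
      B ^ 2 * ∫ y in (-1:ℝ)..1, deriv (deriv ψ) y ^ 2 := by
  obtain ⟨hψ2, hm, hp, hdm, hdp⟩ := hψ
  have hK : 0 ≤ B ^ 2 * ∫ y in (-1:ℝ)..1, deriv (deriv ψ) y ^ 2 :=
    mul_nonneg (sq_nonneg B) (integral_sq_nonneg_of_le (by norm_num))
  rcases le_or_gt (g * (ρp - ρm) * ψ 0 ^ 2 - B ^ 2 * ∫ y in (-1:ℝ)..1, deriv ψ y ^ 2) 0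
    with hD | hD
  · exact (mul_nonpos_of_nonneg_of_nonpos (sq_nonneg ξ) hD).trans hK
  have hbdd : BddBelow (XivcSet g ρp ρm B) := by
    refine ⟨0, ?_⟩
    rintro r ⟨φ, -, -, -, -, -, hpos, rfl⟩
    exact div_nonneg (mul_nonneg (sq_nonneg B) (integral_sq_nonneg_of_le (by norm_num))) hpos.le
  refine (le_div_iff₀ hD).1 ?_
  calc ξ ^ 2 ≤ xivc ^ 2 := sq_le_sq.2 (hξ.trans (le_abs_self _))
    _ = sInf (XivcSet g ρp ρm B) := hxivcsq
    _ ≤ _ := csInf_le hbdd ⟨ψ, hψ2, hm, hp, hdm, hdp, hD, rfl⟩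

lemma two_mul_sq_mul_E0 {g ρp ρm B ξ : ℝ} (hξ : ξ ≠ 0) {ψ : ℝ → ℝ} (hψ : ContDiff ℝ 2 ψ) :
    2 * (ξ ^ 2 * E0 g ρp ρm B ξ ψ) =
      B ^ 2 * (∫ y in (-1:ℝ)..1, deriv (deriv ψ) y ^ 2) -
        ξ ^ 2 * (g * (ρp - ρm) * ψ 0 ^ 2 - B ^ 2 * ∫ y in (-1:ℝ)..1, deriv ψ y ^ 2) := by
  have h1 : Continuous (deriv ψ) := hψ.continuous_deriv one_le_two
  have h2 : Continuous (deriv (deriv ψ)) := (hψ.deriv' (n := 1)).continuous_deriv_one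
  have hsplit : ∫ y in (-1:ℝ)..1, B ^ 2 * (deriv ψ y ^ 2 + deriv (deriv ψ) y ^ 2 / ξ ^ 2) =
      B ^ 2 * (∫ y in (-1:ℝ)..1, deriv ψ y ^ 2) +
        B ^ 2 / ξ ^ 2 * ∫ y in (-1:ℝ)..1, deriv (deriv ψ) y ^ 2 := by
    have hi1 : IntervalIntegrable (fun y => B ^ 2 * deriv ψ y ^ 2) volume (-1) 1 :=
      ((h1.pow 2).const_mul _).intervalIntegrable _ _
    have hi2 : IntervalIntegrable (fun y => B ^ 2 / ξ ^ 2 * deriv (deriv ψ) y ^ 2) volume (-1) 1 :=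
      ((h2.pow 2).const_mul _).intervalIntegrable _ _
    rw [← intervalIntegral.integral_const_mul, ← intervalIntegral.integral_const_mul,
      ← intervalIntegral.integral_add hi1 hi2]
    congr 1 with y
    ring
  rw [E0, hsplit]
  field_simp
  ring

lemma sq_mul_gravity_sub_tension_le {g ρp ρm B Bc xivc ξ : ℝ} (hBc : 0 < Bc)
    (hBcsq : Bc ^ 2 = sSup (BcSet g ρp ρm)) (hxivcsq : xivc ^ 2 = sInf (XivcSet g ρp ρm B))
    (hcase : Bc ≤ |B| ∨ |ξ| ≤ xivc) {ψ : ℝ → ℝ} (hψ : Adm ψ) :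
    ξ ^ 2 * (g * (ρp - ρm) * ψ 0 ^ 2 - B ^ 2 * ∫ y in (-1:ℝ)..1, deriv ψ y ^ 2) ≤
      B ^ 2 * ∫ y in (-1:ℝ)..1, deriv (deriv ψ) y ^ 2 := by
  rcases hcase with hBBc | hξ
  · have hD := gravity_le_tension_of_le_abs hBc hBcsq hBBc (hψ.1.of_le one_le_two) hψ.2.1
      hψ.2.2.1
    exact (mul_nonpos_of_nonneg_of_nonpos (sq_nonneg ξ) (sub_nonpos.2 hD)).trans
      (mul_nonneg (sq_nonneg B) (integral_sq_nonneg_of_le (by norm_num)))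
  · exact sq_mul_gravity_sub_tension_le_of_abs_le hxivcsq hξ hψ

lemma sq_mul_E0_nonneg {g ρp ρm B Bc xivc ξ : ℝ} (hBc : 0 < Bc)
    (hBcsq : Bc ^ 2 = sSup (BcSet g ρp ρm)) (hxivcsq : xivc ^ 2 = sInf (XivcSet g ρp ρm B))
    (hξ : ξ ≠ 0) (hcase : Bc ≤ |B| ∨ |ξ| ≤ xivc) {ψ : ℝ → ℝ} (hψ : Adm ψ) :
    0 ≤ ξ ^ 2 * E0 g ρp ρm B ξ ψ := by
  have := two_mul_sq_mul_E0 (g := g) (ρp := ρp) (ρm := ρm) (B := B) hξ hψ.1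
  linarith [sq_mul_gravity_sub_tension_le hBc hBcsq hxivcsq hcase hψ]

lemma E1_nonneg {μp μm ξ : ℝ} (hμp : 0 ≤ μp) (hμm : 0 ≤ μm) {ψ : ℝ → ℝ} :
    0 ≤ E1 μp μm ξ ψ :=
  mul_nonneg (by norm_num) <| intervalIntegral.integral_nonneg (by norm_num) fun y _ =>
    mul_nonneg (by split_ifs <;> assumption) (by positivity)

theorem alpha_nonneg_of_stable_regime_general
    (ρp ρm μp μm g B Bc xivc : ℝ)
    (hμp : 0 < μp) (hμm : 0 < μm)
    (hBc : 0 < Bc) (hBcsq : Bc ^ 2 = sSup (BcSet g ρp ρm))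
    (hxivcsq : xivc ^ 2 = sInf (XivcSet g ρp ρm B))
    (ξ : ℝ) (hξ : ξ ≠ 0)
    (hcase : Bc ≤ |B| ∨ (|B| < Bc ∧ |ξ| ≤ xivc)) :
    ∀ s : ℝ, 0 < s → 0 ≤ alpha ρp ρm μp μm g B ξ s := by
  intro s hs
  refine Real.sInf_nonneg ?_
  rintro _ ⟨ψ, hψ, -, rfl⟩
  exact add_nonneg (sq_mul_E0_nonneg hBc hBcsq hxivcsq hξ (hcase.imp_right And.right) hψ)
    (mul_nonneg hs.le (E1_nonneg hμp.le hμm.le))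

/-- if `|B| ≥ |B|_c`, or `|B| < |B|_c` and `|ξ| ≤ |ξ|_{vc}^B`, then `α(s) ≥ 0`
for all `s > 0`. -/
theorem alpha_nonneg_of_stable_regime
    (ρp ρm μp μm g B Bc xivc : ℝ)
    (hρm : 0 < ρm) (hρ : ρm < ρp) (hμp : 0 < μp) (hμm : 0 < μm) (hg : 0 < g)
    (hB : B ≠ 0) (hBc : 0 < Bc) (hBcsq : Bc ^ 2 = sSup (BcSet g ρp ρm))
    (hxivc0 : 0 ≤ xivc) (hxivcsq : xivc ^ 2 = sInf (XivcSet g ρp ρm B))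
    (ξ : ℝ) (hξ : ξ ≠ 0)
    (hcase : Bc ≤ |B| ∨ (|B| < Bc ∧ |ξ| ≤ xivc)) :
    ∀ s : ℝ, 0 < s → 0 ≤ alpha ρp ρm μp μm g B ξ s :=
  alpha_nonneg_of_stable_regime_general ρp ρm μp μm g B Bc xivc hμp hμm hBc hBcsq hxivcsq ξ hξ hcase
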